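/- arXiv:1504.01993 — 2 statements merged into one kernel-verified Lean document; each statement's English description precedes it below -/
import Mathlib

section
/- Let (p1,q1), (p2,q2), (p3,q3) be pairs of integers satisfying −p_n q_{n+1} + p_{n+1} q_n = −1 for n = 1, 2, 3 (indices mod 3). Then exactly one of the three products p1·p2, p2·p3, p3·p1 is odd; equivalently, exactly two of the products are even. -/
/-! Each relation makes `pₙ` and `pₙ₊₁` coprime, so at most one `pₙ` is even. Adding the three
relations gives `q₁(p₂ - p₃) + q₂(p₃ - p₁) + q₃(p₁ - p₂) = -3`, which is impossible if all `pₙ`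
are odd, since then the left side is even. So exactly one `pₙ` is even, and the product of the
other two is the only odd product. -/

theorem isCoprime_of_neg_mul_add_mul_eq_neg_one {R : Type*} [CommRing R] {a b x y : R}
    (h : -a * y + b * x = -1) : IsCoprime a b :=
  ⟨y, -x, by linear_combination -h⟩

theorem Int.odd_or_odd_of_isCoprime {a b : ℤ} (h : IsCoprime a b) : Odd a ∨ Odd b := by
  by_contra! hab
  simp only [Int.not_odd_iff_even, even_iff_two_dvd] at hab
  exact Int.isUnit_iff.not.mpr (by decide) (h.isUnit_of_dvd' hab.1 hab.2)

theorem not_odd_and_odd_and_odd_of_cyclic_relations {p1 q1 p2 q2 p3 q3 : ℤ}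
    (h1 : -p1 * q2 + p2 * q1 = -1) (h2 : -p2 * q3 + p3 * q2 = -1)
    (h3 : -p3 * q1 + p1 * q3 = -1) : ¬ (Odd p1 ∧ Odd p2 ∧ Odd p3) := by
  rintro ⟨hp1, hp2, hp3⟩
  have hsum : q1 * (p2 - p3) + q2 * (p3 - p1) + q3 * (p1 - p2) = -3 := by
    linear_combination h1 + h2 + h3
  have heven : Even (q1 * (p2 - p3) + q2 * (p3 - p1) + q3 * (p1 - p2)) :=
    ((hp2.sub_odd hp3).mul_left q1 |>.add ((hp3.sub_odd hp1).mul_left q2)).add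
      ((hp1.sub_odd hp2).mul_left q3)
  rw [hsum] at heven
  exact absurd heven (by decide)

/-- If `(p₁,q₁), (p₂,q₂), (p₃,q₃)` are pairs of integers with
`-pₙ q_{n+1} + p_{n+1} qₙ = -1` for `n = 1,2,3` (indices mod 3), then exactly one of
the three products `p₁p₂`, `p₂p₃`, `p₃p₁` is odd (equivalently, exactly two are even). -/
theorem exactly_one_product_odd_of_cyclic_surgery_triple
    (p1 q1 p2 q2 p3 q3 : ℤ)
    (h1 : -p1 * q2 + p2 * q1 = -1)
    (h2 : -p2 * q3 + p3 * q2 = -1)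
    (h3 : -p3 * q1 + p1 * q3 = -1) :
    (Odd (p1 * p2) ∧ ¬ Odd (p2 * p3) ∧ ¬ Odd (p3 * p1)) ∨
    (¬ Odd (p1 * p2) ∧ Odd (p2 * p3) ∧ ¬ Odd (p3 * p1)) ∨
    (¬ Odd (p1 * p2) ∧ ¬ Odd (p2 * p3) ∧ Odd (p3 * p1)) := by
  have h12 := Int.odd_or_odd_of_isCoprime (isCoprime_of_neg_mul_add_mul_eq_neg_one h1)
  have h23 := Int.odd_or_odd_of_isCoprime (isCoprime_of_neg_mul_add_mul_eq_neg_one h2)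
  have h31 := Int.odd_or_odd_of_isCoprime (isCoprime_of_neg_mul_add_mul_eq_neg_one h3)
  have hnot_all := not_odd_and_odd_and_odd_of_cyclic_relations h1 h2 h3
  simp only [Int.odd_mul]
  tauto
end

section
/- In an abstract Gysin sequence, if M_{k−1} = 0, M_k ≅ F2, and M_{k+1} = 0, then either (increasing case) dim S_{k+1} = dim S_k = a+1 and dim S_{k−1} = a with π : M_k → S_k injective, or (decreasing case) dim S_{k+1} = a−1, dim S_k = dim S_{k−1} = a with ι : S_k → M_k nonzero, where a ≥ 0 in the first case and a ≥ 1 in the second. -/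
/-!
Restricted to a graded piece, exactness identifies the kernel of each map with the image of the
preceding map from the matching piece. Rank–nullity at `S_{k+1}`, `M_k` and (twice) `S_k` then
relates the dimensions; `M_{k+1} = 0` makes `e` injective on `S_{k+1}` and `M_{k-1} = 0` makes it
onto `S_{k-1}`. Since `dim M_k = 1`, the image `ι(S_k)` has dimension `0` or `1`, and these are
the increasing and the decreasing case.
-/

open DirectSum Module

theorem Submodule.finrank_eq_finrank_map_add_finrank_ker_inf {K V W : Type*} [DivisionRing K]
    [AddCommGroup V] [Module K V] [AddCommGroup W] [Module K W]
    (p : Submodule K V) [FiniteDimensional K p] (f : V →ₗ[K] W) :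
    finrank K p = finrank K (p.map f) + finrank K ↥(LinearMap.ker f ⊓ p) := by
  have h := LinearMap.finrank_range_add_finrank_ker (f.domRestrict p)
  rw [LinearMap.range_domRestrict, LinearMap.ker_domRestrict] at h
  rw [← (Submodule.comapSubtypeEquivOfLe (inf_le_right : LinearMap.ker f ⊓ p ≤ p)).finrank_eq]
  rwa [Submodule.comap_inf, Submodule.comap_subtype_self, inf_top_eq, eq_comm]

section Graded

variable {ι R A B C : Type*} [DecidableEq ι] [AddRightCancelSemigroup ι] [Semiring R]
  [AddCommMonoid A] [Module R A] [AddCommMonoid B] [Module R B] [AddCommMonoid C] [Module R C]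
  {gA : ι → Submodule R A} {gB : ι → Submodule R B} [Decomposition gA] [Decomposition gB]
  {f : A →ₗ[R] B} {d : ι}

theorem decompose_map_of_degree (hf : ∀ i, (gA i).map f ≤ gB (i + d)) {i j : ι} (hij : i + d = j)
    (y : A) : (decompose gB (f y) j : B) = f (decompose gA y i) := by
  induction y using DirectSum.Decomposition.inductionOn gA with
  | zero => simp
  | @homogeneous i' y =>
    have hfy : f y ∈ gB (i' + d) := hf i' ⟨y, y.2, rfl⟩
    by_cases h : i' = i
    · subst h hij
      rw [decompose_of_mem_same gB hfy, decompose_coe, of_eq_same]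
    · rw [decompose_of_mem_ne gB hfy (fun h' => h (add_right_cancel (h'.trans hij.symm))),
        decompose_coe, of_eq_of_ne _ _ _ (Ne.symm h), Submodule.coe_zero, map_zero]
  | add y y' hy hy' => simp [hy, hy']

theorem Function.Exact.ker_inf_eq_map_of_degree {g : B →ₗ[R] C} (hfg : Function.Exact f g)
    (hf : ∀ i, (gA i).map f ≤ gB (i + d)) {i j : ι} (hij : i + d = j) :
    LinearMap.ker g ⊓ gB j = (gA i).map f := by
  apply le_antisymm
  · rintro x ⟨hgx, hx⟩
    obtain ⟨y, rfl⟩ := (hfg x).1 hgx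
    rw [← decompose_of_mem_same gB hx, decompose_map_of_degree hf hij]
    exact Submodule.mem_map_of_mem (Submodule.coe_mem _)
  · exact le_inf (Submodule.map_le_iff_le_comap.2 fun y _ => (hfg _).2 ⟨y, rfl⟩) (hij ▸ hf i)

end Graded

theorem Function.Exact.finrank_eq_finrank_map_add_finrank_map_of_degree {ι K A B C : Type*}
    [DecidableEq ι] [AddRightCancelSemigroup ι] [DivisionRing K]
    [AddCommGroup A] [Module K A] [AddCommGroup B] [Module K B] [AddCommGroup C] [Module K C]
    {gA : ι → Submodule K A} {gB : ι → Submodule K B} [Decomposition gA] [Decomposition gB]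
    {f : A →ₗ[K] B} {g : B →ₗ[K] C} {d : ι} (hfg : Function.Exact f g)
    (hf : ∀ i, (gA i).map f ≤ gB (i + d)) {i j : ι} (hij : i + d = j)
    [FiniteDimensional K (gB j)] :
    finrank K (gB j) = finrank K ((gB j).map g) + finrank K ((gA i).map f) := by
  rw [(gB j).finrank_eq_finrank_map_add_finrank_ker_inf g, hfg.ker_inf_eq_map_of_degree hf hij]

/-- increasing/decreasing dichotomy. Consider an abstract Gysin
sequence: graded `F₂`-vector spaces `S`, `M` (realized as gradings `gS`, `gM` on
ambient modules) with a long exact sequence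
`... → S_j →^ι M_j →^π S_j →^e S_{j-1} → ...` in which `ι`, `π` have degree `0` and
`e` has degree `-1`, all graded pieces being finite-dimensional.  If `M_{k-1} = 0`,
`M_k ≅ F₂` and `M_{k+1} = 0`, then either (increasing case)
`dim S_{k+1} = dim S_k = a+1`, `dim S_{k-1} = a` and `π : M_k → S_k` is injective,
or (decreasing case) `dim S_{k+1} = a-1`, `dim S_k = dim S_{k-1} = a` with `a ≥ 1`
and `ι` is nonzero on `S_k`. -/
theorem gysin_increasing_or_decreasing
    {SS MM : Type} [AddCommGroup SS] [Module (ZMod 2) SS]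
    [AddCommGroup MM] [Module (ZMod 2) MM]
    (gS : ℤ → Submodule (ZMod 2) SS) (gM : ℤ → Submodule (ZMod 2) MM)
    (hSinternal : DirectSum.IsInternal gS)
    (hMinternal : DirectSum.IsInternal gM)
    (hSfin : ∀ i, FiniteDimensional (ZMod 2) ↥(gS i))
    (hMfin : ∀ i, FiniteDimensional (ZMod 2) ↥(gM i))
    (eMap : SS →ₗ[ZMod 2] SS) (iMap : SS →ₗ[ZMod 2] MM) (pMap : MM →ₗ[ZMod 2] SS)
    (hedeg : ∀ i, (gS i).map eMap ≤ gS (i - 1))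
    (hideg : ∀ i, (gS i).map iMap ≤ gM i)
    (hpdeg : ∀ i, (gM i).map pMap ≤ gS i)
    (hexact1 : Function.Exact ⇑eMap ⇑iMap)
    (hexact2 : Function.Exact ⇑iMap ⇑pMap)
    (hexact3 : Function.Exact ⇑pMap ⇑eMap)
    (k : ℤ)
    (hMkm : gM (k - 1) = ⊥)
    (hMk : Module.finrank (ZMod 2) ↥(gM k) = 1)
    (hMkp : gM (k + 1) = ⊥) :
    (∃ a : ℕ,
      Module.finrank (ZMod 2) ↥(gS (k + 1)) = a + 1 ∧
      Module.finrank (ZMod 2) ↥(gS k) = a + 1 ∧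
      Module.finrank (ZMod 2) ↥(gS (k - 1)) = a ∧
      ∀ x ∈ gM k, pMap x = 0 → x = 0) ∨
    (∃ a : ℕ, 1 ≤ a ∧
      Module.finrank (ZMod 2) ↥(gS (k + 1)) = a - 1 ∧
      Module.finrank (ZMod 2) ↥(gS k) = a ∧
      Module.finrank (ZMod 2) ↥(gS (k - 1)) = a ∧
      ∃ x ∈ gS k, iMap x ≠ 0) := by
  let := hSinternal.chooseDecomposition
  let := hMinternal.chooseDecomposition
  have he : ∀ i, (gS i).map eMap ≤ gS (i + -1) := by simpa [← sub_eq_add_neg] using hedeg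
  have hi : ∀ i, (gS i).map iMap ≤ gM (i + 0) := by simpa using hideg
  have hp : ∀ i, (gM i).map pMap ≤ gS (i + 0) := by simpa using hpdeg
  have hsurj : (gS k).map eMap = gS (k - 1) := by
    rw [← hexact1.ker_inf_eq_map_of_degree he (i := k) (j := k - 1) (by ring), inf_eq_right,
      LinearMap.le_ker_iff_map, ← le_bot_iff, ← hMkm]
    exact hideg _
  have dimSkp := hexact3.finrank_eq_finrank_map_add_finrank_map_of_degree hp (add_zero (k + 1))
  have dimSk := hexact1.finrank_eq_finrank_map_add_finrank_map_of_degree he (i := k + 1) (by ring)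
  have dimMk := hexact2.finrank_eq_finrank_map_add_finrank_map_of_degree hi (add_zero k)
  have dimSk' := hexact3.finrank_eq_finrank_map_add_finrank_map_of_degree hp (add_zero k)
  have hker := hexact2.ker_inf_eq_map_of_degree hi (add_zero k)
  rw [hMkp, Submodule.map_bot, finrank_bot, add_zero] at dimSkp
  rw [hsurj] at dimSk'
  have hι : finrank (ZMod 2) ((gS k).map iMap) ≤ 1 := by omega
  rcases Nat.le_one_iff_eq_zero_or_eq_one.1 hι with h0 | h1
  · left
    refine ⟨_, by omega, by omega, rfl, fun x hx hpx => ?_⟩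
    rw [Submodule.finrank_eq_zero.1 h0, Submodule.eq_bot_iff] at hker
    exact hker x ⟨hpx, hx⟩
  · right
    refine ⟨_, by omega, by omega, rfl, by omega, ?_⟩
    have hne : (gS k).map iMap ≠ ⊥ := fun h => by rw [← Submodule.finrank_eq_zero] at h; omega
    obtain ⟨_, ⟨x, hx, rfl⟩, hx0⟩ := ((gS k).map iMap).ne_bot_iff.1 hne
    exact ⟨x, hx, hx0⟩
end
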